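/- Translation of roots only changes the first finite free cumulant: for a monic degree-N polynomial p and c ∈ ℝ, setting p_c(x) = p(x − c), one has κ_1^N(p_c) = κ_1^N(p) + c and κ_j^N(p_c) = κ_j^N(p) for all 2 ≤ j ≤ N. -/

import Mathlib

/-!
Write `a_k = D_k · Σ_π ∏_{V ∈ π} h(|V|)` with `D_k = (N)_k / (N^k k!)`, `π` running over the
set partitions of `{1, …, k}` and `h(n) = (-1)^(n-1) N (n-1)! κ_n`. Translating the roots by `c`
turns `a_k` into `Σ_m C(N-k+m, m) c^m a_{k-m}`. Replacing `κ_1` by `κ_1 + c` adds `Nc` to `h(1)`,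
and sorting the partitions by the set `M` of singleton blocks charged with `Nc` turns the
partition sum into `Σ_m C(k, m) (Nc)^m Σ_{π ∈ 𝒫(k-m)} ∏ h(|V|)`; the scalar identity
`C(N-k+m, m) D_{k-m} = D_k C(k, m) N^m` matches the two expansions. Finally the cumulants are
determined by the coefficients: the partition sum equals `h(k)` plus terms involving only
`h(1), …, h(k-1)`.
-/

open Polynomial Finset

/-- Normalized repeated derivative `∂_{k|N} p = ((N-k)!/N!) p^{(N-k)}`. -/
noncomputable def dOp (N k : ℕ) (p : Polynomial ℝ) : Polynomial ℝ :=
  C ((Nat.factorial (N - k) : ℝ) / (Nat.factorial N : ℝ)) * (derivative^[N - k] p)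

/-- Dilation of a degree-`d` polynomial: `(𝒟_a p)(x) = a^d p(x/a)`. -/
noncomputable def dil (d : ℕ) (a : ℝ) (p : Polynomial ℝ) : Polynomial ℝ :=
  C (a ^ d) * p.comp (C a⁻¹ * X)

/-- Probabilists' Hermite polynomial. -/
noncomputable def hermiteP (k : ℕ) : Polynomial ℝ :=
  ∑ j ∈ Finset.range (k / 2 + 1),
    C ((Nat.factorial k : ℝ) * (-1) ^ j /
        ((Nat.factorial j : ℝ) * (Nat.factorial (k - 2 * j)) * 2 ^ j)) * X ^ (k - 2 * j)

/-- The signed coefficients `a_k = (-1)^k coeff_{N-k}(p)` of a monic degree-`N` polynomial. -/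
noncomputable def coeffSeq (N : ℕ) (p : Polynomial ℝ) (k : ℕ) : ℝ :=
  (-1 : ℝ) ^ k * p.coeff (N - k)

/-- `κ : ℕ → ℝ` is the sequence of finite free cumulants associated to the signed
coefficient sequence `a` of a monic degree-`N` polynomial. -/
noncomputable def cumulantRel (N : ℕ) (a κ : ℕ → ℝ) : Prop :=
  ∀ k, 1 ≤ k → k ≤ N →
    a k = ((Nat.descFactorial N k : ℝ) / ((N : ℝ) ^ k * (Nat.factorial k : ℝ))) *
      ∑ π : Finpartition (Finset.univ : Finset (Fin k)),
        (-1 : ℝ) ^ (k - π.parts.card) * (N : ℝ) ^ π.parts.card *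
          ∏ V ∈ π.parts, ((Nat.factorial (V.card - 1) : ℝ) * κ V.card)

/-- Finite free additive convolution `p ⊞_N q`. -/
noncomputable def ffconv (N : ℕ) (p q : Polynomial ℝ) : Polynomial ℝ :=
  X ^ N + ∑ k ∈ Finset.Icc 1 N,
    C ((-1 : ℝ) ^ k *
      ∑ ij ∈ Finset.HasAntidiagonal.antidiagonal k,
        ((Nat.factorial (N - ij.1) : ℝ) * (Nat.factorial (N - ij.2) : ℝ) /
            ((Nat.factorial N : ℝ) * (Nat.factorial (N - k) : ℝ))) *
          coeffSeq N p ij.1 * coeffSeq N q ij.2) * X ^ (N - k)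

/-- `j`-th moment of the empirical root distribution of `p`. -/
noncomputable def momentP (j : ℕ) (p : Polynomial ℝ) : ℝ :=
  (1 / (p.natDegree : ℝ)) * (p.roots.map (fun r => r ^ j)).sum

/-- Apply the differential operator `P(d/dx)` to the polynomial `r`. -/
noncomputable def applyDiffOp (P r : Polynomial ℝ) : Polynomial ℝ :=
  ∑ i ∈ Finset.range (P.natDegree + 1), C (P.coeff i) * derivative^[i] r

theorem Finset.map_preimage_of_subset_map {α β : Type*} (f : α ↪ β) {s : Finset α}
    {t : Finset β} (h : t ⊆ s.map f) : (t.preimage f f.injective.injOn).map f = t := by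
  ext b; simp only [mem_map, mem_preimage]; grind

namespace Finpartition

section Embedding

variable {α β : Type*} [DecidableEq α] [DecidableEq β]

def mapEmbedding (f : α ↪ β) {s : Finset α} (P : Finpartition s) : Finpartition (s.map f) where
  parts := P.parts.map (Finset.mapEmbedding f).toEmbedding
  supIndep := by
    rw [supIndep_iff_pairwiseDisjoint, coe_map]
    rintro _ ⟨V, hV, rfl⟩ _ ⟨W, hW, rfl⟩ hne
    exact (disjoint_map f).2 (P.disjoint hV hW fun h => hne (h ▸ rfl))
  sup_parts := by
    conv_rhs => rw [← P.sup_parts]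
    ext x; simp; grind
  bot_notMem := by simp

noncomputable def comapEmbedding (f : α ↪ β) {s : Finset α} (P : Finpartition (s.map f)) :
    Finpartition s :=
  .ofExistsUnique (P.parts.image fun W => W.preimage f f.injective.injOn)
    (by
      simp only [mem_image, forall_exists_index, and_imp, forall_apply_eq_imp_iff₂]
      exact fun W hW => preimage_subset (P.le hW))
    (by
      intro x hx
      obtain ⟨W, ⟨hW, hxW⟩, hu⟩ := P.existsUnique_mem (mem_map_of_mem f hx)
      refine ⟨_, ⟨mem_image_of_mem _ hW, mem_preimage.2 hxW⟩, ?_⟩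
      simp only [mem_image, and_imp, forall_exists_index]
      rintro _ W' hW' rfl hx'
      rw [hu W' ⟨hW', mem_preimage.1 hx'⟩])
    (by
      simp only [mem_image, not_exists, not_and]
      intro W hW hW0
      have := Finset.map_preimage_of_subset_map f (P.le hW)
      rw [hW0, map_empty] at this
      exact P.empty_notMem_parts (this ▸ hW))

noncomputable def equivMapEmbedding (f : α ↪ β) (s : Finset α) :
    Finpartition s ≃ Finpartition (s.map f) where
  toFun := mapEmbedding f
  invFun := comapEmbedding f
  left_inv P := by
    ext1
    simp only [mapEmbedding, comapEmbedding, ofExistsUnique_parts, map_eq_image, image_image]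
    conv_rhs => rw [← image_id (s := P.parts)]
    exact image_congr fun V _ => by simpa [map_eq_image] using preimage_map f V
  right_inv Q := by
    ext1
    simp only [mapEmbedding, comapEmbedding, ofExistsUnique_parts, map_eq_image, image_image]
    conv_rhs => rw [← image_id (s := Q.parts)]
    exact image_congr fun W hW => by
      simpa [map_eq_image] using Finset.map_preimage_of_subset_map f (Q.le hW)

end Embedding

section Singletons

variable {α : Type*} [DecidableEq α]

theorem sup_parts_sdiff {s : Finset α} (P : Finpartition s) {T : Finset (Finset α)}
    (hT : T ⊆ P.parts) : (P.parts \ T).sup id = s \ T.sup id := by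
  ext x
  simp only [mem_sup, mem_sdiff, id]
  constructor
  · rintro ⟨V, ⟨hV, hVT⟩, hx⟩
    refine ⟨P.le hV hx, ?_⟩
    rintro ⟨W, hW, hxW⟩
    exact hVT (P.eq_of_mem_parts hV (hT hW) hx hxW ▸ hW)
  · rintro ⟨hxs, hxT⟩
    obtain ⟨V, hV, hxV⟩ := P.exists_mem hxs
    exact ⟨V, ⟨hV, fun hVT => hxT ⟨V, hVT, hxV⟩⟩, hxV⟩

theorem bot_parts_sup_eq_self {T : Finset (Finset α)} (hT : ∀ V ∈ T, #V = 1) :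
    (⊥ : Finpartition (T.sup id)).parts = T := by
  ext V
  simp only [mem_bot_iff, mem_sup, id]
  constructor
  · rintro ⟨x, ⟨W, hW, hxW⟩, rfl⟩
    obtain ⟨y, rfl⟩ := card_eq_one.1 (hT W hW)
    rwa [mem_singleton.1 hxW]
  · intro hV
    obtain ⟨x, rfl⟩ := card_eq_one.1 (hT V hV)
    exact ⟨x, ⟨{x}, hV, mem_singleton_self x⟩, rfl⟩

noncomputable def addSingletons {s M : Finset α} (hM : M ⊆ s) (P : Finpartition (s \ M)) :
    Finpartition s :=
  .ofExistsUnique (P.parts ∪ (⊥ : Finpartition M).parts)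
    (by
      simp only [parts_bot, mem_union, mem_map, Function.Embedding.coeFn_mk]
      rintro _ (hV | ⟨x, hx, rfl⟩)
      · exact (P.le hV).trans sdiff_subset
      · exact singleton_subset_iff.2 (hM hx))
    (by
      intro x hx
      simp only [parts_bot, mem_union, mem_map, Function.Embedding.coeFn_mk]
      by_cases hxM : x ∈ M
      · refine ⟨{x}, by simp [hxM], ?_⟩
        rintro V ⟨hV | ⟨y, hy, rfl⟩, hxV⟩
        · exact absurd hxM (mem_sdiff.1 (P.le hV hxV)).2
        · rw [mem_singleton.1 hxV]
      · obtain ⟨V, ⟨hV, hxV⟩, hu⟩ := P.existsUnique_mem (mem_sdiff.2 ⟨hx, hxM⟩)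
        refine ⟨V, ⟨.inl hV, hxV⟩, ?_⟩
        rintro W ⟨hW | ⟨y, hy, rfl⟩, hxW⟩
        · exact hu W ⟨hW, hxW⟩
        · exact absurd (mem_singleton.1 hxW ▸ hy) hxM)
    (by simp [P.empty_notMem_parts])

theorem sum_parts_sdiff_bot {β : Type*} [AddCommMonoid β] {s M : Finset α} (hM : M ⊆ s)
    (F : Finset (Finset α) → β) :
    ∑ P : Finpartition s with (⊥ : Finpartition M).parts ⊆ P.parts,
        F (P.parts \ (⊥ : Finpartition M).parts) =
      ∑ Q : Finpartition (s \ M), F Q.parts := by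
  refine sum_bij' (fun P hP => P.ofSubset sdiff_subset ?_) (fun Q _ => addSingletons hM Q)
    (fun _ _ => mem_univ _) ?_ ?_ ?_ (fun _ _ => rfl)
  · rw [P.sup_parts_sdiff (mem_filter.1 hP).2, Finpartition.sup_parts]
  · intro Q _
    simp [addSingletons]
  · intro P hP
    ext1
    simpa [addSingletons] using (mem_filter.1 hP).2
  · intro Q _
    ext1
    simp only [addSingletons, ofExistsUnique_parts]
    refine union_sdiff_cancel_right (disjoint_right.2 ?_)
    simp only [parts_bot, mem_map, Function.Embedding.coeFn_mk, forall_exists_index, and_imp]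
    rintro _ x hx rfl hxQ
    exact (mem_sdiff.1 (Q.le hxQ (mem_singleton_self x))).2 hx

theorem prod_add_single_one {R : Type*} [CommSemiring R] (g : ℕ → R) (a : R) {s : Finset α}
    (P : Finpartition s) :
    ∏ V ∈ P.parts, (g + Pi.single 1 a : ℕ → R) #V =
      ∑ M ∈ s.powerset with (⊥ : Finpartition M).parts ⊆ P.parts,
        a ^ #M * ∏ V ∈ P.parts \ (⊥ : Finpartition M).parts, g #V := by
  simp_rw [Pi.add_apply, add_comm (g _), prod_add]
  symm
  calc _ = ∑ M ∈ s.powerset with (⊥ : Finpartition M).parts ⊆ P.parts,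
        (∏ V ∈ (⊥ : Finpartition M).parts, (Pi.single 1 a : ℕ → R) #V) *
          ∏ V ∈ P.parts \ (⊥ : Finpartition M).parts, g #V := by
        refine sum_congr rfl fun M _ => ?_
        simp [parts_bot, prod_map]
    -- `∏ V ∈ T, δ_{#V = 1} a` vanishes unless `T` is the discrete partition of `T.sup id`
    _ = _ := by
        refine sum_of_injOn (fun M => (⊥ : Finpartition M).parts) ?_ ?_ ?_ fun _ _ => rfl
        · intro M _ M' _ h
          simpa only [Finpartition.sup_parts] using congrArg (sup · id) h
        · intro M hM
          simp only [coe_filter, mem_powerset, mem_coe] at hM ⊢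
          exact hM.2
        · intro T hT hTM
          rw [mem_powerset] at hT
          by_cases hsingle : ∀ V ∈ T, #V = 1
          · refine absurd ⟨T.sup id, ?_, bot_parts_sup_eq_self hsingle⟩ hTM
            simp only [coe_filter, mem_powerset, Set.mem_ofPred_eq,
              bot_parts_sup_eq_self hsingle, hT, and_true]
            exact Finset.sup_le fun V hV => P.le (hT hV)
          · push Not at hsingle
            obtain ⟨V, hV, hV1⟩ := hsingle
            rw [prod_eq_zero hV (by simp [hV1]), zero_mul]

end Singletons

theorem card_lt_of_ne_indiscrete {α : Type*} [DecidableEq α] {s : Finset α} {hs : s ≠ ∅}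
    {P : Finpartition s} (hP : P ≠ indiscrete hs) {V : Finset α} (hV : V ∈ P.parts) :
    #V < #s := by
  refine (card_le_card (P.le hV)).lt_of_ne fun hVs => hP ?_
  have hVs := eq_of_subset_of_card_le (P.le hV) hVs.ge
  ext1
  refine eq_singleton_iff_unique_mem.2 ⟨hVs ▸ hV, fun W hW => ?_⟩
  obtain ⟨w, hw⟩ := P.nonempty_of_mem_parts hW
  exact hVs ▸ P.eq_of_mem_parts hW hV hw (hVs ▸ P.le hW hw)

end Finpartition

section BlockProdSum

variable {α β R : Type*} [DecidableEq α] [DecidableEq β] [CommSemiring R]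

noncomputable def blockProdSum (g : ℕ → R) (s : Finset α) : R :=
  ∑ P : Finpartition s, ∏ V ∈ P.parts, g #V

theorem blockProdSum_empty (g : ℕ → R) : blockProdSum g (∅ : Finset α) = 1 :=
  (Fintype.sum_unique (ι := Finpartition (⊥ : Finset α)) _).trans prod_empty

theorem blockProdSum_map (g : ℕ → R) (f : α ↪ β) (s : Finset α) :
    blockProdSum g (s.map f) = blockProdSum g s :=
  (Fintype.sum_equiv (Finpartition.equivMapEmbedding f s) _ _ fun P => by
    simp [Finpartition.equivMapEmbedding, Finpartition.mapEmbedding, prod_map]).symm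

theorem blockProdSum_eq_fin (g : ℕ → R) (s : Finset α) :
    blockProdSum g s = blockProdSum g (univ : Finset (Fin #s)) := by
  let e : Fin #s ↪ α := s.equivFin.symm.toEmbedding.trans (.subtype (· ∈ s))
  have he : (univ : Finset (Fin #s)).map e = s := by rw [← map_map]; simp [attach_map_val]
  rw [← blockProdSum_map g e, he]

theorem blockProdSum_add_single_one (g : ℕ → R) (a : R) (s : Finset α) :
    blockProdSum (g + Pi.single 1 a) s = ∑ M ∈ s.powerset, a ^ #M * blockProdSum g (s \ M) := by
  simp_rw [blockProdSum, Finpartition.prod_add_single_one, mul_sum]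
  rw [sum_comm' (t' := s.powerset) (s' := fun M => {P | (⊥ : Finpartition M).parts ⊆ P.parts})]
  · refine sum_congr rfl fun M hM => ?_
    exact Finpartition.sum_parts_sdiff_bot (mem_powerset.1 hM) fun T => a ^ #M * ∏ V ∈ T, g #V
  · simp [and_comm]

theorem blockProdSum_fin_add_single_one (g : ℕ → R) (a : R) (k : ℕ) :
    blockProdSum (g + Pi.single 1 a) (univ : Finset (Fin k)) =
      ∑ m ∈ range (k + 1), k.choose m * a ^ m * blockProdSum g (univ : Finset (Fin (k - m))) := by
  rw [blockProdSum_add_single_one]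
  have hcompl (M : Finset (Fin k)) : blockProdSum g (univ \ M) =
      blockProdSum g (univ : Finset (Fin (k - #M))) := by
    rw [blockProdSum_eq_fin, card_univ_sdiff, Fintype.card_fin]
  simp_rw [hcompl,
    sum_powerset_apply_card fun m => a ^ m * blockProdSum g (univ : Finset (Fin (k - m))),
    card_univ, Fintype.card_fin, nsmul_eq_mul, mul_assoc]

theorem eq_of_blockProdSum_eq {R : Type*} [CommRing R] {g₁ g₂ : ℕ → R} {s : Finset α}
    (hs : s.Nonempty) (h : ∀ n, 1 ≤ n → n < #s → g₁ n = g₂ n)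
    (hsum : blockProdSum g₁ s = blockProdSum g₂ s) : g₁ #s = g₂ #s := by
  let P₀ := Finpartition.indiscrete hs.ne_empty
  have hdiff : blockProdSum g₁ s - blockProdSum g₂ s = g₁ #s - g₂ #s := by
    rw [blockProdSum, blockProdSum, ← sum_sub_distrib, ← add_sum_erase _ _ (mem_univ P₀),
      sum_eq_zero fun P hP => ?_]
    · simp [P₀]
    · rw [prod_congr rfl fun V hV => h _ (card_pos.2 (P.nonempty_of_mem_parts hV))
        (P.card_lt_of_ne_indiscrete (ne_of_mem_erase hP) hV), sub_self]
  rwa [hsum, sub_self, eq_comm, sub_eq_zero] at hdiff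

end BlockProdSum

noncomputable def cumulantScale (N k : ℕ) : ℝ :=
  N.descFactorial k / ((N : ℝ) ^ k * k.factorial)

noncomputable def cumulantKernel (N : ℕ) (κ : ℕ → ℝ) (n : ℕ) : ℝ :=
  (-1) ^ (n - 1) * N * (n - 1).factorial * κ n

theorem cumulantScale_ne_zero {N k : ℕ} (hk : k ≤ N) : cumulantScale N k ≠ 0 := by
  have : N.descFactorial k ≠ 0 := by rw [Ne, Nat.descFactorial_eq_zero_iff_lt]; omega
  rcases Nat.eq_zero_or_pos N with rfl | hN
  · simp [show k = 0 by omega, cumulantScale]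
  · unfold cumulantScale
    positivity

theorem choose_mul_cumulantScale {N k m : ℕ} (hmk : m ≤ k) (hkN : k ≤ N) :
    ((N - (k - m)).choose m : ℝ) * cumulantScale N (k - m) =
      cumulantScale N k * (k.choose m * (N : ℝ) ^ m) := by
  rcases Nat.eq_zero_or_pos N with rfl | hN
  · simp [show k = 0 by omega, show m = 0 by omega]
  have hdesc : (N - (k - m)).descFactorial m * N.descFactorial (k - m) = N.descFactorial k := by
    simpa [Nat.sub_sub_self hmk] using Nat.descFactorial_mul_descFactorial (n := N) (Nat.sub_le k m)
  have hfact := Nat.choose_mul_factorial_mul_factorial hmk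
  rw [Nat.descFactorial_eq_factorial_mul_choose] at hdesc
  unfold cumulantScale
  rw [show (N : ℝ) ^ k = N ^ (k - m) * N ^ m by rw [← pow_add, Nat.sub_add_cancel hmk]]
  field_simp
  norm_cast
  rw [← hdesc, ← hfact]
  ring

theorem cumulantKernel_add_single_one (N : ℕ) (κ : ℕ → ℝ) (c : ℝ) :
    cumulantKernel N (κ + Pi.single 1 c) = cumulantKernel N κ + Pi.single 1 (N * c) := by
  ext n
  rcases eq_or_ne n 1 with rfl | hn
  · simp [cumulantKernel]; ring
  · simp [cumulantKernel, hn]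

theorem sum_finpartition_eq_blockProdSum (N : ℕ) (κ : ℕ → ℝ) (k : ℕ) :
    ∑ π : Finpartition (univ : Finset (Fin k)),
        (-1 : ℝ) ^ (k - π.parts.card) * (N : ℝ) ^ π.parts.card *
          ∏ V ∈ π.parts, ((Nat.factorial (V.card - 1) : ℝ) * κ V.card) =
      blockProdSum (cumulantKernel N κ) (univ : Finset (Fin k)) := by
  refine sum_congr rfl fun π _ => ?_
  have hsum : k - #π.parts = ∑ V ∈ π.parts, (#V - 1) := by
    have hpos : ∀ V ∈ π.parts, #V - 1 + 1 = #V := fun V hV =>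
      Nat.sub_add_cancel (card_pos.2 (π.nonempty_of_mem_parts hV))
    have := π.sum_card_parts
    rw [card_univ, Fintype.card_fin, ← sum_congr rfl hpos, sum_add_distrib, sum_const,
      smul_eq_mul, mul_one] at this
    omega
  simp only [cumulantKernel, prod_mul_distrib, prod_pow_eq_pow_sum, hsum, prod_const]
  ring

theorem cumulantRel_iff {N : ℕ} {a κ : ℕ → ℝ} :
    cumulantRel N a κ ↔ ∀ k, 1 ≤ k → k ≤ N →
      a k = cumulantScale N k * blockProdSum (cumulantKernel N κ) (univ : Finset (Fin k)) := by
  simp only [cumulantRel, sum_finpartition_eq_blockProdSum, cumulantScale]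

theorem cumulantRel.unique {N : ℕ} {a κ κ' : ℕ → ℝ} (h : cumulantRel N a κ)
    (h' : cumulantRel N a κ') : ∀ j, 1 ≤ j → j ≤ N → κ j = κ' j := by
  rw [cumulantRel_iff] at h h'
  intro j
  induction j using Nat.strong_induction_on with
  | _ j ih =>
  intro hj hjN
  have hsum : blockProdSum (cumulantKernel N κ) (univ : Finset (Fin j)) =
      blockProdSum (cumulantKernel N κ') univ :=
    mul_left_cancel₀ (cumulantScale_ne_zero hjN) ((h j hj hjN).symm.trans (h' j hj hjN))
  have hker : cumulantKernel N κ j = cumulantKernel N κ' j := by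
    have hne : (univ : Finset (Fin j)).Nonempty := ⟨⟨0, hj⟩, mem_univ _⟩
    simpa using eq_of_blockProdSum_eq hne (fun n hn hnj => by
      rw [card_univ, Fintype.card_fin] at hnj
      rw [cumulantKernel, cumulantKernel, ih n hnj hn (hnj.le.trans hjN)]) hsum
  refine mul_left_cancel₀ ?_ hker
  have : (N : ℝ) ≠ 0 := by exact_mod_cast (show N ≠ 0 by omega)
  positivity

theorem coeffSeq_comp_X_sub_C {N : ℕ} {p : ℝ[X]} (hp : p.natDegree ≤ N) (c : ℝ) {k : ℕ}
    (hk : k ≤ N) :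
    coeffSeq N (p.comp (X - C c)) k =
      ∑ m ∈ range (k + 1), ((N - (k - m)).choose m : ℝ) * c ^ m * coeffSeq N p (k - m) := by
  have htaylor : p.comp (X - C c) = taylor (-c) p := by
    rw [taylor_apply, C_neg, sub_eq_add_neg]
  rw [coeffSeq, htaylor, taylor_coeff, eval_eq_sum_range' (n := k + 1), mul_sum]
  · refine sum_congr rfl fun m hm => ?_
    have hm : m ≤ k := Nat.lt_succ_iff.1 (mem_range.1 hm)
    rw [hasseDeriv_coeff, coeffSeq, show m + (N - k) = N - (k - m) by omega,
      Nat.choose_symm_of_eq_add (show N - (k - m) = N - k + m by omega), neg_pow c,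
      show (-1 : ℝ) ^ k = (-1) ^ (k - m) * (-1) ^ m by rw [← pow_add, Nat.sub_add_cancel hm]]
    have hsq : (-1 : ℝ) ^ m * (-1) ^ m = 1 := by rw [← mul_pow]; norm_num
    linear_combination
      (((N - (k - m)).choose m : ℝ) * p.coeff (N - (k - m)) * (-1) ^ (k - m) * c ^ m) * hsq
  · have := natDegree_hasseDeriv_le p (N - k)
    omega

theorem cumulantRel_comp_X_sub_C {N : ℕ} {p : ℝ[X]} (hp : p.Monic) (hpd : p.natDegree = N)
    (c : ℝ) {κ : ℕ → ℝ} (hκ : cumulantRel N (coeffSeq N p) κ) :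
    cumulantRel N (coeffSeq N (p.comp (X - C c))) (κ + Pi.single 1 c) := by
  rw [cumulantRel_iff] at hκ ⊢
  have hκ₀ : ∀ j ≤ N, coeffSeq N p j =
      cumulantScale N j * blockProdSum (cumulantKernel N κ) (univ : Finset (Fin j)) := by
    intro j hj
    rcases Nat.eq_zero_or_pos j with rfl | hj0
    · simp [coeffSeq, cumulantScale, univ_eq_empty, blockProdSum_empty, ← hpd, hp.coeff_natDegree]
    · exact hκ j hj0 hj
  intro k _ hkN
  rw [coeffSeq_comp_X_sub_C hpd.le c hkN, cumulantKernel_add_single_one,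
    blockProdSum_fin_add_single_one, mul_sum]
  refine sum_congr rfl fun m hm => ?_
  have hmk : m ≤ k := Nat.lt_succ_iff.1 (mem_range.1 hm)
  rw [hκ₀ _ ((Nat.sub_le k m).trans hkN), mul_pow]
  linear_combination (c ^ m * blockProdSum (cumulantKernel N κ) (univ : Finset (Fin (k - m)))) *
    choose_mul_cumulantScale hmk hkN

/-- translating roots by `c` adds `c` to the first finite free cumulant
and leaves all higher cumulants unchanged. -/
theorem cumulants_translate (N : ℕ) (hN : 1 ≤ N) (p : Polynomial ℝ) (c : ℝ)
    (hp : p.Monic) (hpd : p.natDegree = N)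
    (κ κc : ℕ → ℝ)
    (hκ : cumulantRel N (coeffSeq N p) κ)
    (hκc : cumulantRel N (coeffSeq N (p.comp (X - C c))) κc) :
    κc 1 = κ 1 + c ∧ ∀ j, 2 ≤ j → j ≤ N → κc j = κ j := by
  have h := hκc.unique (cumulantRel_comp_X_sub_C hp hpd c hκ)
  exact ⟨by simpa using h 1 le_rfl hN,
    fun j hj hjN => by simpa [show j ≠ 1 by omega] using h j (by omega) hjN⟩
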